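/- Let a = 31207386885274502188173522132023665167365193670823768234185354856354918873864275 and M = 36812852443922071184402498913076070503146229820861211558347078871354783744850778, and for n ∈ ℕ set u_n = F_{3n}/2. Then for every integer x with x ≡ a (mod M) and all k, b ∈ ℕ, one has x² − u_{30+90k} ≠ 42391^b and x² − u_{30+90k} ≠ −42391^b. -/

import Mathlib

/-!
Everything is read modulo the prime `271`, which divides `M`. There `x ≡ 85`, and since the
Fibonacci sequence has period `270` mod `271`, `F_{90 + 270k} ≡ F_90 ≡ 51`, so `u_{30+90k} ≡ 161`
and `x² - u_{30+90k} ≡ 18`. Finally `42391^54 ≡ 1` while `18^54 ≢ 1 (mod 271)`, and `54` is even,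
so `18` is not congruent to any `±42391^b`.
-/

/-- `u n = F_{3n} / 2`, an integer since `F_{3n}` is always even. -/
def u (n : ℕ) : ℤ := (Nat.fib (3 * n) : ℤ) / 2

lemma Nat.fib_cast_periodic {R : Type*} [Semiring R] {p : ℕ} (h₀ : (Nat.fib p : R) = 0)
    (h₁ : (Nat.fib (p + 1) : R) = 1) : Function.Periodic (fun n ↦ (Nat.fib n : R)) p := by
  intro n
  cases n with
  | zero => simpa using h₀
  | succ n =>
    simp only [add_right_comm n 1 p, add_comm n p, Nat.fib_add p n, Nat.cast_add, Nat.cast_mul,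
      h₀, h₁, zero_mul, one_mul, zero_add]

lemma two_mul_u (n : ℕ) : 2 * u n = Nat.fib (3 * n) := by
  have h : ((2 : ℕ) : ℤ) ∣ Nat.fib (3 * n) :=
    Int.natCast_dvd_natCast.mpr (Nat.fib_dvd 3 (3 * n) (dvd_mul_right 3 n))
  exact Int.mul_ediv_cancel' h

lemma ne_pow_and_ne_neg_pow_of_pow_ne_one {R : Type*} [Monoid R] [HasDistribNeg R] {y g : R}
    {n : ℕ} (hn : Even n) (hg : g ^ n = 1) (hy : y ^ n ≠ 1) (b : ℕ) :
    y ≠ g ^ b ∧ y ≠ -g ^ b := by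
  have hgb : (g ^ b) ^ n = 1 := by rw [← pow_mul, mul_comm, pow_mul, hg, one_pow]
  refine ⟨?_, ?_⟩ <;> rintro rfl
  · exact hy hgb
  · exact hy (by rwa [hn.neg_pow])

lemma u_cast_zmod_271 (k : ℕ) : (u (30 + 90 * k) : ZMod 271) = 161 := by
  have hper : Function.Periodic (fun n ↦ (Nat.fib n : ZMod 271)) 270 :=
    Nat.fib_cast_periodic (by norm_num; reduce_mod_char) (by norm_num; reduce_mod_char)
  have hfib : (Nat.fib (3 * (30 + 90 * k)) : ZMod 271) = 51 := by
    rw [show 3 * (30 + 90 * k) = 90 + k * 270 by ring]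
    exact ((hper.nat_mul k) 90).trans (by norm_num; reduce_mod_char)
  have h2u : 2 * (u (30 + 90 * k) : ZMod 271) = 51 := by
    rw [← hfib]
    exact_mod_cast congrArg (Int.cast : ℤ → ZMod 271) (two_mul_u _)
  calc (u (30 + 90 * k) : ZMod 271) = 136 * (2 * u (30 + 90 * k)) := by
        rw [← mul_assoc, show (136 * 2 : ZMod 271) = 1 by decide, one_mul]
    _ = 161 := by rw [h2u]; decide

/-- Case 4.16 of the proof of Theorem 1.3: for every integer
`x ≡ a (mod M)` and all `k, b ∈ ℕ`, `x² - u_{30+90k}` is not `±42391^b`. -/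
theorem sq_sub_u_ne_pm_pow_42391
    (x : ℤ)
    (hx : x ≡ 31207386885274502188173522132023665167365193670823768234185354856354918873864275
      [ZMOD 36812852443922071184402498913076070503146229820861211558347078871354783744850778])
    (k b : ℕ) :
    x ^ 2 - u (30 + 90 * k) ≠ 42391 ^ b ∧ x ^ 2 - u (30 + 90 * k) ≠ -(42391 ^ b) := by
  have hx271 : (x : ZMod 271) = 85 := by
    rw [(ZMod.intCast_eq_intCast_iff' _ _ 271).mpr (hx.of_dvd (by norm_num))]
    decide
  have hres : ((x ^ 2 - u (30 + 90 * k) : ℤ) : ZMod 271) = 18 := by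
    push_cast
    rw [hx271, u_cast_zmod_271]
    decide
  have hmod := ne_pow_and_ne_neg_pow_of_pow_ne_one
    (y := ((x ^ 2 - u (30 + 90 * k) : ℤ) : ZMod 271)) (g := 42391) (n := 54)
    (by decide) (by decide) (by rw [hres]; decide) b
  refine ⟨fun h ↦ hmod.1 ?_, fun h ↦ hmod.2 ?_⟩ <;> rw [h] <;> push_cast <;> rfl
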